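/- Let E be a real inner product space, X ⊆ E a nonempty convex set, d : E → ℝ a convex Fréchet-differentiable function with Bregman divergence V(y,x) := d(y) − d(x) − ⟨∇d(x), y − x⟩, μ > 0, δ ≥ 0, L > 0, and g : E → E a μ-relatively strongly monotone operator on X with z* ∈ X a solution of the Minty variational inequality. Let (z_k)_{k≥0}, (w_k)_{k≥0} in X and positive reals (L_k)_{k≥1} with L_i ≤ 2L for all i ≥ 1 satisfy, for every k ≥ 0: (i) w_k minimizes y ↦ ⟨(1/L_{k+1})·g(z_k), y⟩ + V(y, z_k) over X; (ii) z_{k+1} minimizes u ↦ ⟨(1/L_{k+1})·g(w_k), u⟩ + V(u, z_k) + (μ/L_{k+1})·V(u, w_k) over X; (iii) ⟨g(z_k) − g(w_k), z_{k+1} − w_k⟩ ≤ L_{k+1}·( V(w_k, z_k) + V(z_{k+1}, w_k) ) + L_{k+1}·δ. Then for every k ≥ 0: V(z*, z_{k+1}) ≤ (1 + μ/(2L))^{−(k+1)}·V(z*, z_0) + δ·(1 + 2L/μ). -/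

import Mathlib

/-!
The first-order optimality conditions of the two Bregman proximal steps, combined through the
three-point identity with the step-size test (iii), give the one-step contraction
`(1 + μ / L_{k+1}) V(z*, z_{k+1}) ≤ V(z*, z_k) + δ`. The monotonicity term it needs is
`μ V(z*, w) ≤ ⟪g w, w - z*⟫`, which holds at a mere Minty solution `z*`: at the mean-value point
`x = z* + c (w - z*)` of `d` on `[z*, w]` one has `V(w, x) + V(x, w) = (1 - c) V(z*, w)`, and
the Minty inequality at `x` disposes of `g x`. With `L_{k+1} ≤ 2L` the contraction is unrolled
into geometric decay with ratio `(1 + μ / (2L))⁻¹` plus the error `δ / (μ / (2L)) = 2Lδ/μ`.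
-/

open scoped RealInnerProductSpace

section Gradient

variable {E : Type*} [NormedAddCommGroup E] [InnerProductSpace ℝ E] [CompleteSpace E]
  {f h : E → ℝ} {f' h' x : E}

theorem HasGradientAt.add (hf : HasGradientAt f f' x) (hh : HasGradientAt h h' x) :
    HasGradientAt (fun y => f y + h y) (f' + h') x := by
  rw [hasGradientAt_iff_hasFDerivAt, map_add]
  exact hf.hasFDerivAt.add hh.hasFDerivAt

theorem HasGradientAt.sub (hf : HasGradientAt f f' x) (hh : HasGradientAt h h' x) :
    HasGradientAt (fun y => f y - h y) (f' - h') x := by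
  rw [hasGradientAt_iff_hasFDerivAt, map_sub]
  exact hf.hasFDerivAt.sub hh.hasFDerivAt

theorem HasGradientAt.const_mul (r : ℝ) (hf : HasGradientAt f f' x) :
    HasGradientAt (fun y => r * f y) (r • f') x := by
  rw [hasGradientAt_iff_hasFDerivAt, map_smul]
  exact hf.hasFDerivAt.const_mul r

theorem hasGradientAt_inner_right (c x : E) : HasGradientAt (fun y => ⟪c, y⟫) c x := by
  rw [hasGradientAt_iff_hasFDerivAt]
  exact (InnerProductSpace.toDual ℝ E c).hasFDerivAt

theorem IsMinOn.inner_gradient_sub_nonneg {X : Set E} {m u G : E} (hmin : IsMinOn f X m)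
    (hf : HasGradientAt f G m) (hX : Convex ℝ X) (hm : m ∈ X) (hu : u ∈ X) :
    0 ≤ ⟪G, u - m⟫ := by
  simpa using hmin.localize.hasFDerivWithinAt_nonneg hf.hasFDerivAt.hasFDerivWithinAt
    (sub_mem_posTangentConeAt_of_segment_subset (hX.segment_subset hm hu))

end Gradient

section Bregman

variable {E : Type*} [NormedAddCommGroup E] [InnerProductSpace ℝ E]

def bregmanDiv (d : E → ℝ) (Dd : E → E) (y x : E) : ℝ :=
  d y - d x - ⟪Dd x, y - x⟫

variable {d : E → ℝ} {Dd : E → E}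

theorem bregmanDiv_three_point (a b u : E) :
    ⟪Dd b - Dd a, u - b⟫ = bregmanDiv d Dd u a - bregmanDiv d Dd u b - bregmanDiv d Dd b a := by
  simp only [bregmanDiv, inner_sub_left, inner_sub_right]
  ring

theorem bregmanDiv_add_bregmanDiv_swap (a b : E) :
    bregmanDiv d Dd a b + bregmanDiv d Dd b a = ⟪Dd a - Dd b, a - b⟫ := by
  simp only [bregmanDiv, inner_sub_left, inner_sub_right]
  ring

variable [CompleteSpace E]

theorem hasDerivAt_comp_add_smul (hd : ∀ x, HasGradientAt d (Dd x) x) (x v : E) (t : ℝ) :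
    HasDerivAt (fun s : ℝ => d (x + s • v)) ⟪Dd (x + t • v), v⟫ t := by
  have hline : HasDerivAt (fun s : ℝ => x + s • v) v t := by
    simpa using ((hasDerivAt_id t).smul_const v).const_add x
  simpa [Function.comp_def] using (hd (x + t • v)).hasFDerivAt.comp_hasDerivAt t hline

theorem bregmanDiv_nonneg (hdconv : ConvexOn ℝ Set.univ d) (hd : ∀ x, HasGradientAt d (Dd x) x)
    (y x : E) : 0 ≤ bregmanDiv d Dd y x := by
  have hconv : ConvexOn ℝ Set.univ (fun t : ℝ => d (x + t • (y - x))) := by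
    simpa [Function.comp_def, AffineMap.lineMap_apply_module', add_comm]
      using hdconv.comp_affineMap (AffineMap.lineMap x y)
  have hslope := hconv.le_slope_of_hasDerivAt (Set.mem_univ 0) (Set.mem_univ 1) one_pos
    (by simpa using hasDerivAt_comp_add_smul hd x (y - x) 0)
  simp only [slope_def_field, zero_smul, add_zero, one_smul, add_sub_cancel, sub_zero,
    div_one] at hslope
  rw [bregmanDiv]
  linarith

theorem hasGradientAt_bregmanDiv_left (hd : ∀ x, HasGradientAt d (Dd x) x) (x u : E) :
    HasGradientAt (fun y => bregmanDiv d Dd y x) (Dd u - Dd x) u := by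
  have hlin : HasGradientAt (fun y => ⟪Dd x, y - x⟫) (Dd x) u := by
    simpa only [inner_sub_right, sub_zero]
      using (hasGradientAt_inner_right (Dd x) u).sub (hasGradientAt_const u ⟪Dd x, x⟫)
  simpa only [bregmanDiv, sub_zero] using ((hd u).sub (hasGradientAt_const u (d x))).sub hlin

variable {X : Set E}

theorem bregmanProx_optimality (hd : ∀ x, HasGradientAt d (Dd x) x) (hX : Convex ℝ X)
    {r s : ℝ} {c x y m u : E} (hm : m ∈ X)
    (hmin : ∀ v ∈ X, r * ⟪c, m⟫ + bregmanDiv d Dd m x + s * bregmanDiv d Dd m y ≤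
      r * ⟪c, v⟫ + bregmanDiv d Dd v x + s * bregmanDiv d Dd v y) (hu : u ∈ X) :
    0 ≤ r * ⟪c, u - m⟫ + (bregmanDiv d Dd u x - bregmanDiv d Dd u m - bregmanDiv d Dd m x) +
      s * (bregmanDiv d Dd u y - bregmanDiv d Dd u m - bregmanDiv d Dd m y) := by
  have hgrad := (((hasGradientAt_inner_right c m).const_mul r).add
    (hasGradientAt_bregmanDiv_left hd x m)).add
      ((hasGradientAt_bregmanDiv_left hd y m).const_mul s)
  have hfirst := (isMinOn_iff.mpr hmin).inner_gradient_sub_nonneg hgrad hX hm hu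
  rwa [inner_add_left, inner_add_left, real_inner_smul_left, real_inner_smul_left,
    bregmanDiv_three_point, bregmanDiv_three_point] at hfirst

theorem exists_bregmanDiv_add_swap_eq_mul (hd : ∀ x, HasGradientAt d (Dd x) x) (a b : E) :
    ∃ c ∈ Set.Ioo (0 : ℝ) 1, bregmanDiv d Dd b (a + c • (b - a)) +
      bregmanDiv d Dd (a + c • (b - a)) b = (1 - c) * bregmanDiv d Dd a b := by
  have hφ := hasDerivAt_comp_add_smul hd a (b - a)
  obtain ⟨c, hc, hslope⟩ := exists_hasDerivAt_eq_slope _ _ zero_lt_one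
    (HasDerivAt.continuousOn fun t _ => hφ t) fun t _ => hφ t
  refine ⟨c, hc, ?_⟩
  simp only [zero_smul, add_zero, one_smul, add_sub_cancel, sub_zero, div_one] at hslope
  have hsub : b - (a + c • (b - a)) = (1 - c) • (b - a) := by module
  rw [bregmanDiv_add_bregmanDiv_swap, hsub, real_inner_smul_right, inner_sub_left, hslope,
    bregmanDiv, ← neg_sub b a, inner_neg_right]
  ring

theorem mul_bregmanDiv_le_inner_of_minty (hd : ∀ x, HasGradientAt d (Dd x) x) (hX : Convex ℝ X)
    {μ : ℝ} {g : E → E}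
    (hmono : ∀ x ∈ X, ∀ y ∈ X,
      μ * (bregmanDiv d Dd y x + bregmanDiv d Dd x y) ≤ ⟪g y - g x, y - x⟫)
    {zs w : E} (hzs : zs ∈ X) (hMinty : ∀ x ∈ X, ⟪g x, zs - x⟫ ≤ 0) (hw : w ∈ X) :
    μ * bregmanDiv d Dd zs w ≤ ⟪g w, w - zs⟫ := by
  obtain ⟨c, ⟨hc0, hc1⟩, hsymm⟩ := exists_bregmanDiv_add_swap_eq_mul hd zs w
  set x := zs + c • (w - zs)
  have hx : x ∈ X := hX.add_smul_sub_mem hzs hw ⟨hc0.le, hc1.le⟩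
  have hwx : w - x = (1 - c) • (w - zs) := by module
  have hgx : 0 ≤ ⟪g x, w - zs⟫ := by
    have hminty := hMinty x hx
    rw [show zs - x = -(c • (w - zs)) by module, inner_neg_right, real_inner_smul_right] at hminty
    exact (mul_nonneg_iff_of_pos_left hc0).mp (neg_nonpos.mp hminty)
  have hmono_x := hmono x hx w hw
  rw [hsymm, hwx, real_inner_smul_right, inner_sub_left] at hmono_x
  refine le_of_mul_le_mul_left ?_ (sub_pos.mpr hc1)
  linear_combination hmono_x + mul_nonneg (sub_pos.mpr hc1).le hgx

theorem one_add_div_mul_bregmanDiv_le_of_extragradient_step (hdconv : ConvexOn ℝ Set.univ d)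
    (hd : ∀ x, HasGradientAt d (Dd x) x) (hX : Convex ℝ X) {μ a δ : ℝ} (hμ : 0 ≤ μ) (ha : 0 < a)
    {g : E → E} {zs z w z' : E} (hzs : zs ∈ X)
    (hstrong : μ * bregmanDiv d Dd zs w ≤ ⟪g w, w - zs⟫)
    (hw : w ∈ X) (hwmin : ∀ y ∈ X, (1 / a) * ⟪g z, w⟫ + bregmanDiv d Dd w z ≤
      (1 / a) * ⟪g z, y⟫ + bregmanDiv d Dd y z)
    (hz' : z' ∈ X) (hzmin : ∀ u ∈ X,
      (1 / a) * ⟪g w, z'⟫ + bregmanDiv d Dd z' z + (μ / a) * bregmanDiv d Dd z' w ≤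
        (1 / a) * ⟪g w, u⟫ + bregmanDiv d Dd u z + (μ / a) * bregmanDiv d Dd u w)
    (hls : ⟪g z - g w, z' - w⟫ ≤ a * (bregmanDiv d Dd w z + bregmanDiv d Dd z' w) + a * δ) :
    (1 + μ / a) * bregmanDiv d Dd zs z' ≤ bregmanDiv d Dd zs z + δ := by
  have hw_opt : 0 ≤ (1 / a) * ⟪g z, z' - w⟫ +
      (bregmanDiv d Dd z' z - bregmanDiv d Dd z' w - bregmanDiv d Dd w z) := by
    simpa using bregmanProx_optimality (s := 0) (y := z) hd hX hw (by simpa using hwmin) hz'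
  have hz'_opt := bregmanProx_optimality hd hX hz' hzmin hzs
  have hsplit : ⟪g w, w - zs⟫ =
      ⟪g z - g w, z' - w⟫ - ⟪g z, z' - w⟫ - ⟪g w, zs - z'⟫ := by
    simp only [inner_sub_left, inner_sub_right]
    ring
  have hdrop := mul_nonneg hμ (bregmanDiv_nonneg hdconv hd z' w)
  field_simp at hw_opt hz'_opt
  rw [← mul_le_mul_iff_of_pos_left ha]
  field_simp
  linear_combination hw_opt + hz'_opt + hls + hstrong + hdrop + hsplit

end Bregman

theorem le_inv_pow_mul_add_div_of_mul_succ_le {q δ : ℝ} {u : ℕ → ℝ} (hq : 1 < q) (hδ : 0 ≤ δ)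
    (h : ∀ k, q * u (k + 1) ≤ u k + δ) (k : ℕ) : u k ≤ (q ^ k)⁻¹ * u 0 + δ / (q - 1) := by
  have hq0 : 0 < q := zero_lt_one.trans hq
  have hq1 : q - 1 ≠ 0 := sub_ne_zero.mpr hq.ne'
  induction k with
  | zero => simpa using div_nonneg hδ (sub_nonneg.mpr hq.le)
  | succ k ih =>
    rw [← mul_le_mul_iff_of_pos_left hq0]
    calc q * u (k + 1) ≤ u k + δ := h k
      _ ≤ (q ^ k)⁻¹ * u 0 + δ / (q - 1) + δ := by gcongr
      _ = q * ((q ^ (k + 1))⁻¹ * u 0 + δ / (q - 1)) := by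
        field_simp
        ring

theorem algorithm5_convergence_bounded_constants_general
    {E : Type*} [NormedAddCommGroup E] [InnerProductSpace ℝ E] [CompleteSpace E]
    (X : Set E) (hXconv : Convex ℝ X)
    (d : E → ℝ) (hdconv : ConvexOn ℝ Set.univ d)
    (Dd : E → E) (hd : ∀ x, HasGradientAt d (Dd x) x)
    (V : E → E → ℝ) (hV : ∀ y x, V y x = d y - d x - ⟪Dd x, y - x⟫)
    (μ : ℝ) (hμ : 0 < μ) (g : E → E)
    (hmono : ∀ x ∈ X, ∀ y ∈ X, μ * (V y x + V x y) ≤ ⟪g y - g x, y - x⟫)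
    (zs : E) (hzs : zs ∈ X) (hMinty : ∀ x ∈ X, ⟪g x, zs - x⟫ ≤ 0)
    (z w : ℕ → E) (hzX : ∀ k, z k ∈ X) (hwX : ∀ k, w k ∈ X)
    (L : ℕ → ℝ) (hL : ∀ i ≥ 1, 0 < L i)
    (hwmin : ∀ k : ℕ, ∀ y ∈ X,
      (1 / L (k + 1)) * ⟪g (z k), w k⟫ + V (w k) (z k) ≤
        (1 / L (k + 1)) * ⟪g (z k), y⟫ + V y (z k))
    (hzmin : ∀ k : ℕ, ∀ u ∈ X,
      (1 / L (k + 1)) * ⟪g (w k), z (k + 1)⟫ + V (z (k + 1)) (z k) +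
          (μ / L (k + 1)) * V (z (k + 1)) (w k) ≤
        (1 / L (k + 1)) * ⟪g (w k), u⟫ + V u (z k) + (μ / L (k + 1)) * V u (w k))
    (δ Lb : ℝ) (hδ : 0 ≤ δ) (hLb : 0 < Lb) (hLle : ∀ i ≥ 1, L i ≤ 2 * Lb)
    (hls : ∀ k : ℕ, ⟪g (z k) - g (w k), z (k + 1) - w k⟫ ≤
      L (k + 1) * (V (w k) (z k) + V (z (k + 1)) (w k)) + L (k + 1) * δ) :
    ∀ k : ℕ, V zs (z (k + 1)) ≤
      ((1 + μ / (2 * Lb)) ^ (k + 1))⁻¹ * V zs (z 0) + δ * (1 + 2 * Lb / μ) := by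
  obtain rfl : V = bregmanDiv d Dd := funext₂ hV
  have hq : 1 < 1 + μ / (2 * Lb) := by simp only [lt_add_iff_pos_right]; positivity
  have hrec (k : ℕ) : (1 + μ / (2 * Lb)) * bregmanDiv d Dd zs (z (k + 1)) ≤
      bregmanDiv d Dd zs (z k) + δ := by
    have hLk := hL (k + 1) (Nat.le_add_left 1 k)
    calc (1 + μ / (2 * Lb)) * bregmanDiv d Dd zs (z (k + 1))
        ≤ (1 + μ / L (k + 1)) * bregmanDiv d Dd zs (z (k + 1)) := by
          gcongr
          · exact bregmanDiv_nonneg hdconv hd _ _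
          · exact hLle (k + 1) (Nat.le_add_left 1 k)
      _ ≤ bregmanDiv d Dd zs (z k) + δ :=
        one_add_div_mul_bregmanDiv_le_of_extragradient_step hdconv hd hXconv hμ.le hLk hzs
          (mul_bregmanDiv_le_inner_of_minty hd hXconv hmono hzs hMinty (hwX k))
          (hwX k) (hwmin k) (hzX (k + 1)) (hzmin k) (hls k)
  have herr : δ / (1 + μ / (2 * Lb) - 1) ≤ δ * (1 + 2 * Lb / μ) := by
    rw [add_sub_cancel_left, div_div_eq_mul_div, mul_div_assoc]
    gcongr
    linarith
  intro k
  exact (le_inv_pow_mul_add_div_of_mul_succ_le (u := fun k => bregmanDiv d Dd zs (z k))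
    hq hδ hrec (k + 1)).trans (by gcongr)

/-- Theorem 4, second estimate: convergence of Algorithm 5 with adaptive step
constants bounded by 2L. -/
theorem algorithm5_convergence_bounded_constants
    {E : Type*} [NormedAddCommGroup E] [InnerProductSpace ℝ E] [CompleteSpace E]
    (X : Set E) (hXne : X.Nonempty) (hXconv : Convex ℝ X)
    (d : E → ℝ) (hdconv : ConvexOn ℝ Set.univ d)
    (Dd : E → E) (hd : ∀ x, HasGradientAt d (Dd x) x)
    (V : E → E → ℝ) (hV : ∀ y x, V y x = d y - d x - ⟪Dd x, y - x⟫)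
    (μ : ℝ) (hμ : 0 < μ) (g : E → E)
    (hmono : ∀ x ∈ X, ∀ y ∈ X, μ * (V y x + V x y) ≤ ⟪g y - g x, y - x⟫)
    (zs : E) (hzs : zs ∈ X) (hMinty : ∀ x ∈ X, ⟪g x, zs - x⟫ ≤ 0)
    (z w : ℕ → E) (hzX : ∀ k, z k ∈ X) (hwX : ∀ k, w k ∈ X)
    (L : ℕ → ℝ) (hL : ∀ i ≥ 1, 0 < L i)
    (hwmin : ∀ k : ℕ, ∀ y ∈ X,
      (1 / L (k + 1)) * ⟪g (z k), w k⟫ + V (w k) (z k) ≤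
        (1 / L (k + 1)) * ⟪g (z k), y⟫ + V y (z k))
    (hzmin : ∀ k : ℕ, ∀ u ∈ X,
      (1 / L (k + 1)) * ⟪g (w k), z (k + 1)⟫ + V (z (k + 1)) (z k) +
          (μ / L (k + 1)) * V (z (k + 1)) (w k) ≤
        (1 / L (k + 1)) * ⟪g (w k), u⟫ + V u (z k) + (μ / L (k + 1)) * V u (w k))
    (δ Lb : ℝ) (hδ : 0 ≤ δ) (hLb : 0 < Lb) (hLle : ∀ i ≥ 1, L i ≤ 2 * Lb)
    (hls : ∀ k : ℕ, ⟪g (z k) - g (w k), z (k + 1) - w k⟫ ≤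
      L (k + 1) * (V (w k) (z k) + V (z (k + 1)) (w k)) + L (k + 1) * δ) :
    ∀ k : ℕ, V zs (z (k + 1)) ≤
      ((1 + μ / (2 * Lb)) ^ (k + 1))⁻¹ * V zs (z 0) + δ * (1 + 2 * Lb / μ) :=
  algorithm5_convergence_bounded_constants_general X hXconv d hdconv Dd hd V hV μ hμ g hmono zs hzs
    hMinty z w hzX hwX L hL hwmin hzmin δ Lb hδ hLb hLle hls
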